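/- arXiv:2202.06311 — 2 statements merged into one kernel-verified Lean document; each statement's English description precedes it below -/
import Mathlib

section
/- If v ≥ 9ρ + 31, then β(ρ,v,4) ≤ ρv/3 + 5ρ² − 16ρ/3. -/
/-- A `(v,k)`-packing: a family of `k`-subsets of a `v`-set such that
every pair of points occurs in at most one block. -/
def IsPacking (v k : ℕ) (B : Finset (Finset (Fin v))) : Prop :=
  (∀ b ∈ B, b.card = k) ∧
    ∀ b₁ ∈ B, ∀ b₂ ∈ B, b₁ ≠ b₂ → (b₁ ∩ b₂).card ≤ 1

/-- A partial parallel class: a set of pairwise disjoint blocks of the packing. -/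
def IsPPC {v : ℕ} (B P : Finset (Finset (Fin v))) : Prop :=
  P ⊆ B ∧ ∀ b₁ ∈ P, ∀ b₂ ∈ P, b₁ ≠ b₂ → Disjoint b₁ b₂

/-- The maximum PPC of `B` has size `ρ`. -/
def MaxPPCSize {v : ℕ} (B : Finset (Finset (Fin v))) (ρ : ℕ) : Prop :=
  (∃ P, IsPPC B P ∧ P.card = ρ) ∧ ∀ P, IsPPC B P → P.card ≤ ρ

/-- `β(ρ,v,k)`: the maximum number of blocks in a `(v,k)`-packing whose
maximum partial parallel class has size `ρ`. -/
noncomputable def beta (ρ v k : ℕ) : ℕ :=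
  sSup {b | ∃ B : Finset (Finset (Fin v)),
    IsPacking v k B ∧ MaxPPCSize B ρ ∧ B.card = b}

/-- The packing number `D(v,k)`. -/
noncomputable def packingNumber (v k : ℕ) : ℕ :=
  sSup {b | ∃ B : Finset (Finset (Fin v)), IsPacking v k B ∧ B.card = b}

/-!
Fix a maximum partial parallel class `P` of `ρ` blocks and let `S = covered P` be the `4ρ` points
it covers. Maximality gives an exchange principle: no family of pairwise disjoint blocks meeting
`S` only inside `r` blocks of `P` has more than `r` members. In particular every block meets `S`.

For `x ∈ S`, the blocks meeting `S` exactly in `x` have pairwise disjoint triples outside `S`, so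
there are at most `(v - 4ρ) / 3` of them, and by exchange a point carrying four of them leaves
none to the other points of its block of `P`. Hence a block of `P` accounts for at most `12` such
blocks, or for at most `(v - 4ρ) / 3` if it is heavy (one of its points carries at least six).

Two points lie in at most one block, so the pairs of points of `S` bound the blocks meeting `S`
at least three times in terms of those meeting it exactly twice. At most `16` of the latter join
two given blocks of `P`, and by exchange at most `13` if one of them is heavy and at most `8` if
both are. With `k` heavy blocks this gives `3 |B| ≤ k v - 10 ρ k - 30 k + 24 ρ² + 15 ρ`, linear
in `k`: at `k = ρ` it is below `ρ v + 15 ρ² - 16 ρ` for every `v`, and at `k = 0` it is exactly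
when `v ≥ 9 ρ + 31`.
-/

open Finset

def IsLinearFamily {α : Type*} [DecidableEq α] (F : Finset (Finset α)) : Prop :=
  ∀ b ∈ F, ∀ c ∈ F, b ≠ c → (b ∩ c).card ≤ 1

namespace IsLinearFamily

variable {α : Type*} [DecidableEq α] {F G : Finset (Finset α)}

theorem mono (hF : IsLinearFamily F) (hGF : G ⊆ F) : IsLinearFamily G :=
  fun b hb c hc hbc => hF b (hGF hb) c (hGF hc) hbc

theorem eq_of_mem_of_mem (hF : IsLinearFamily F) {b c : Finset α} (hb : b ∈ F) (hc : c ∈ F)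
    {x y : α} (hxy : x ≠ y) (hxb : x ∈ b) (hyb : y ∈ b) (hxc : x ∈ c) (hyc : y ∈ c) : b = c := by
  by_contra hbc
  have := hF b hb c hc hbc
  rw [card_le_one] at this
  exact hxy (this x (mem_inter.2 ⟨hxb, hxc⟩) y (mem_inter.2 ⟨hyb, hyc⟩))

theorem inter_eq_singleton (hF : IsLinearFamily F) {b c : Finset α} (hb : b ∈ F) (hc : c ∈ F)
    (hbc : b ≠ c) {z : α} (hzb : z ∈ b) (hzc : z ∈ c) : b ∩ c = {z} :=
  eq_singleton_iff_unique_mem.2 ⟨mem_inter.2 ⟨hzb, hzc⟩, fun _ ha =>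
    card_le_one.1 (hF b hb c hc hbc) _ ha _ (mem_inter.2 ⟨hzb, hzc⟩)⟩

/-- Members of a linear family through a common point `z` meet any `W ∌ z` in pairwise disjoint
sets. -/
theorem mul_card_le_of_forall_mem (hF : IsLinearFamily F) {z : α} {W : Finset α} {m : ℕ}
    (hzW : z ∉ W) (hzF : ∀ b ∈ F, z ∈ b) (hm : ∀ b ∈ F, m ≤ (b ∩ W).card) :
    m * F.card ≤ W.card := by
  have hdisj : (F : Set (Finset α)).PairwiseDisjoint (· ∩ W) := by
    intro b hb c hc hbc
    rw [Function.onFun, disjoint_left]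
    intro a hab hac
    have := hF.inter_eq_singleton hb hc hbc (hzF b hb) (hzF c hc)
    have ha : a ∈ b ∩ c := mem_inter.2 ⟨(mem_inter.1 hab).1, (mem_inter.1 hac).1⟩
    rw [this, mem_singleton] at ha
    exact hzW (ha ▸ (mem_inter.1 hab).2)
  calc m * F.card = ∑ _b ∈ F, m := by rw [sum_const, smul_eq_mul, mul_comm]
    _ ≤ ∑ b ∈ F, (b ∩ W).card := sum_le_sum hm
    _ = (F.biUnion (· ∩ W)).card := (card_biUnion hdisj).symm
    _ ≤ W.card := card_le_card (biUnion_subset.2 fun _ _ => inter_subset_right)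

theorem sum_choose_two_le (hF : IsLinearFamily F) (S : Finset α) :
    ∑ b ∈ F, (b ∩ S).card.choose 2 ≤ S.card.choose 2 := by
  have hdisj : (F : Set (Finset α)).PairwiseDisjoint fun b => (b ∩ S).powersetCard 2 := by
    intro b hb c hc hbc
    rw [Function.onFun, disjoint_left]
    intro τ hτb hτc
    rw [mem_powersetCard] at hτb hτc
    have := card_le_card (subset_inter (hτb.1.trans inter_subset_left)
      (hτc.1.trans inter_subset_left))
    have := hF b hb c hc hbc
    omega
  simp_rw [← card_powersetCard]
  rw [← card_biUnion hdisj]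
  exact card_le_card (biUnion_subset.2 fun b _ => powersetCard_mono inter_subset_right)

end IsLinearFamily

theorem card_le_sum_card_filter_mem {α : Type*} [DecidableEq α] {F : Finset (Finset α)}
    {s : Finset α} (hF : ∀ b ∈ F, (b ∩ s).Nonempty) :
    F.card ≤ ∑ z ∈ s, (F.filter (z ∈ ·)).card :=
  calc F.card ≤ (s.biUnion fun z => F.filter (z ∈ ·)).card := card_le_card fun b hb => by
        obtain ⟨z, hz⟩ := hF b hb
        exact mem_biUnion.2 ⟨z, (mem_inter.1 hz).2, mem_filter.2 ⟨hb, (mem_inter.1 hz).1⟩⟩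
    _ ≤ _ := card_biUnion_le

theorem sum_offDiag_add_sum {α M : Type*} [DecidableEq α] [AddCommMonoid M] (s : Finset α)
    (g : α × α → M) : ∑ z ∈ s.offDiag, g z + ∑ a ∈ s, g (a, a) = ∑ z ∈ s ×ˢ s, g z := by
  rw [← sum_diag, add_comm, ← sum_union (disjoint_diag_offDiag s), diag_union_offDiag]

theorem sum_offDiag_fst_add_sum {α M : Type*} [DecidableEq α] [AddCommMonoid M] (s : Finset α)
    (f : α → M) : ∑ z ∈ s.offDiag, f z.1 + ∑ a ∈ s, f a = s.card • ∑ a ∈ s, f a := by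
  rw [sum_offDiag_add_sum s fun z => f z.1, sum_product, smul_sum]
  simp only [sum_const]

theorem sum_offDiag_snd_add_sum {α M : Type*} [DecidableEq α] [AddCommMonoid M] (s : Finset α)
    (f : α → M) : ∑ z ∈ s.offDiag, f z.2 + ∑ a ∈ s, f a = s.card • ∑ a ∈ s, f a := by
  rw [sum_offDiag_add_sum s fun z => f z.2, sum_product]
  exact sum_const (∑ a ∈ s, f a)

theorem Nat.cast_sSup_le {R : Type*} [Semiring R] [LinearOrder R] [IsStrictOrderedRing R]
    [FloorSemiring R] {s : Set ℕ} {r : R} (hr : 0 ≤ r) (hs : ∀ n ∈ s, (n : R) ≤ r) :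
    ((sSup s : ℕ) : R) ≤ r :=
  (Nat.cast_le.2 (csSup_le' fun n hn => Nat.le_floor (hs n hn))).trans (Nat.floor_le hr)

variable {v : ℕ}

def covered (P : Finset (Finset (Fin v))) : Finset (Fin v) := P.biUnion id

theorem mem_covered {P : Finset (Finset (Fin v))} {x : Fin v} :
    x ∈ covered P ↔ ∃ p ∈ P, x ∈ p := by
  simp [covered]

theorem subset_covered {P : Finset (Finset (Fin v))} {p : Finset (Fin v)} (hp : p ∈ P) :
    p ⊆ covered P :=
  fun _ hx => mem_covered.2 ⟨p, hp, hx⟩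

theorem inter_covered_of_mem {P : Finset (Finset (Fin v))} {p : Finset (Fin v)} (hp : p ∈ P) :
    p ∩ covered P = p :=
  inter_eq_left.2 (subset_covered hp)

structure IsMaxPPC (B P : Finset (Finset (Fin v))) : Prop where
  isPacking : IsPacking v 4 B
  isPPC : IsPPC B P
  card_le : ∀ Q, IsPPC B Q → Q.card ≤ P.card

def pointBlocks (B P : Finset (Finset (Fin v))) (x : Fin v) : Finset (Finset (Fin v)) :=
  B.filter fun b => b ∩ covered P = {x}

/-- Six is the least number of blocks of `pointBlocks B P x` that always leaves one avoiding the
(at most five) points outside `covered P` of two other blocks. -/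
def heavyBlocks (B P : Finset (Finset (Fin v))) : Finset (Finset (Fin v)) :=
  P.filter fun p => ∃ x ∈ p, 6 ≤ (pointBlocks B P x).card

def pairBlocks (B P : Finset (Finset (Fin v))) : Finset (Finset (Fin v)) :=
  B.filter fun b => (b ∩ covered P).card = 2

def pairBlocksBetween (B P : Finset (Finset (Fin v))) (p q : Finset (Fin v)) :
    Finset (Finset (Fin v)) :=
  (pairBlocks B P).filter fun b => (b ∩ p).Nonempty ∧ (b ∩ q).Nonempty

section

variable {B P : Finset (Finset (Fin v))} {p q b c : Finset (Fin v)} {x : Fin v}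

theorem heavyBlocks_subset : heavyBlocks B P ⊆ P := filter_subset _ P

theorem mem_pointBlocks : c ∈ pointBlocks B P x ↔ c ∈ B ∧ c ∩ covered P = {x} :=
  mem_filter

theorem mem_of_mem_pointBlocks (hc : c ∈ pointBlocks B P x) : x ∈ c :=
  (mem_inter.1 ((mem_pointBlocks.1 hc).2 ▸ mem_singleton_self x)).1

theorem inter_covered_subset_of_mem_pointBlocks (hc : c ∈ pointBlocks B P x) (hx : x ∈ p) :
    c ∩ covered P ⊆ p := by
  rw [(mem_pointBlocks.1 hc).2, singleton_subset_iff]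
  exact hx

theorem card_filter_card_inter_covered_eq_one_le (B P : Finset (Finset (Fin v))) :
    (B.filter fun b => (b ∩ covered P).card = 1).card ≤
      ∑ p ∈ P, ∑ x ∈ p, (pointBlocks B P x).card := by
  calc _ ≤ (P.biUnion fun p => p.biUnion (pointBlocks B P)).card := by
        refine card_le_card fun b hb => ?_
        obtain ⟨hbB, hb1⟩ := mem_filter.1 hb
        obtain ⟨x, hx⟩ := card_eq_one.1 hb1
        obtain ⟨p, hp, hxp⟩ := mem_covered.1 (mem_inter.1 (hx ▸ mem_singleton_self x)).2
        exact mem_biUnion.2 ⟨p, hp, mem_biUnion.2 ⟨x, hxp, mem_pointBlocks.2 ⟨hbB, hx⟩⟩⟩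
    _ ≤ ∑ p ∈ P, (p.biUnion (pointBlocks B P)).card := card_biUnion_le
    _ ≤ _ := sum_le_sum fun _ _ => card_biUnion_le

theorem pairBlocksBetween_comm : pairBlocksBetween B P p q = pairBlocksBetween B P q p :=
  filter_congr fun _ _ => and_comm

theorem pairBlocksBetween_subset : pairBlocksBetween B P p q ⊆ B :=
  (filter_subset _ _).trans (filter_subset _ _)

theorem mem_of_mem_pairBlocksBetween (hb : b ∈ pairBlocksBetween B P p q) : b ∈ B :=
  pairBlocksBetween_subset hb

theorem card_inter_covered_of_mem_pairBlocksBetween (hb : b ∈ pairBlocksBetween B P p q) :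
    (b ∩ covered P).card = 2 :=
  (mem_filter.1 (mem_filter.1 hb).1).2

theorem inter_left_nonempty_of_mem_pairBlocksBetween (hb : b ∈ pairBlocksBetween B P p q) :
    (b ∩ p).Nonempty :=
  (mem_filter.1 hb).2.1

theorem inter_right_nonempty_of_mem_pairBlocksBetween (hb : b ∈ pairBlocksBetween B P p q) :
    (b ∩ q).Nonempty :=
  (mem_filter.1 hb).2.2

end

namespace IsMaxPPC

variable {B P R N : Finset (Finset (Fin v))} {p q b b₀ c d : Finset (Fin v)} {x y z : Fin v}

theorem isLinearFamily (h : IsMaxPPC B P) : IsLinearFamily B := h.isPacking.2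

theorem card_eq (h : IsMaxPPC B P) (hb : b ∈ B) : b.card = 4 := h.isPacking.1 b hb

theorem nonempty (h : IsMaxPPC B P) (hb : b ∈ B) : b.Nonempty :=
  card_pos.1 (by rw [h.card_eq hb]; norm_num)

theorem card_inter_le_one (h : IsMaxPPC B P) (hb : b ∈ B) (hc : c ∈ B) (hbc : b ≠ c) :
    (b ∩ c).card ≤ 1 :=
  h.isPacking.2 b hb c hc hbc

theorem mem_of_mem (h : IsMaxPPC B P) (hp : p ∈ P) : p ∈ B := h.isPPC.1 hp

theorem disjoint (h : IsMaxPPC B P) (hp : p ∈ P) (hq : q ∈ P) (hpq : p ≠ q) : Disjoint p q :=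
  h.isPPC.2 p hp q hq hpq

theorem pairwiseDisjoint (h : IsMaxPPC B P) : (P : Set (Finset (Fin v))).PairwiseDisjoint id :=
  fun _ hp _ hq hpq => h.disjoint hp hq hpq

theorem card_covered (h : IsMaxPPC B P) : (covered P).card = 4 * P.card := by
  rw [covered, card_biUnion h.pairwiseDisjoint, mul_comm, ← smul_eq_mul, ← sum_const]
  exact sum_congr rfl fun p hp => h.card_eq (h.mem_of_mem hp)

theorem disjoint_covered (h : IsMaxPPC B P) (hp : p ∈ P \ R) (hR : R ⊆ P) :
    Disjoint p (covered R) := by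
  rw [covered, disjoint_biUnion_right]
  exact fun r hr => h.disjoint (mem_sdiff.1 hp).1 (hR hr) fun he => (mem_sdiff.1 hp).2 (he ▸ hr)

/-- The exchange argument: replacing `R ⊆ P` by disjoint blocks meeting the points of `P` only
inside `R` yields another partial parallel class. -/
theorem card_le_of_exchange (h : IsMaxPPC B P) (hR : R ⊆ P) (hN : N ⊆ B)
    (hNd : ∀ b ∈ N, ∀ c ∈ N, b ≠ c → Disjoint b c)
    (htr : ∀ b ∈ N, b ∩ covered P ⊆ covered R) : N.card ≤ R.card := by
  have hcross : ∀ p ∈ P \ R, ∀ b ∈ N, Disjoint p b := fun p hp b hb =>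
    disjoint_left.2 fun x hxp hxb => disjoint_left.1 (h.disjoint_covered hp hR) hxp
      (htr b hb (mem_inter.2 ⟨hxb, subset_covered (mem_sdiff.1 hp).1 hxp⟩))
  have hPN : Disjoint (P \ R) N := disjoint_left.2 fun p hp hpN =>
    (h.nonempty (hN hpN)).ne_empty (disjoint_self.1 (hcross p hp p hpN))
  have hQ : IsPPC B (P \ R ∪ N) := by
    refine ⟨union_subset (sdiff_subset.trans h.isPPC.1) hN, fun b hb c hc hbc => ?_⟩
    rcases mem_union.1 hb with hb | hb <;> rcases mem_union.1 hc with hc | hc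
    · exact h.disjoint (mem_sdiff.1 hb).1 (mem_sdiff.1 hc).1 hbc
    · exact hcross b hb c hc
    · exact (hcross c hc b hb).symm
    · exact hNd b hb c hc hbc
  have := h.card_le _ hQ
  rw [card_union_of_disjoint hPN, card_sdiff_of_subset hR] at this
  have := card_le_card hR
  omega

theorem inter_covered_nonempty (h : IsMaxPPC B P) (hb : b ∈ B) : (b ∩ covered P).Nonempty := by
  rw [nonempty_iff_ne_empty]
  intro he
  have := h.card_le_of_exchange (empty_subset P) (singleton_subset_iff.2 hb)
    (by simp) (by simp [he])
  simp at this

theorem not_disjoint_of_inter_covered_subset (h : IsMaxPPC B P) (hp : p ∈ P) (hb : b ∈ B)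
    (hc : c ∈ B) (hbp : b ∩ covered P ⊆ p) (hcp : c ∩ covered P ⊆ p) : ¬Disjoint b c := by
  intro hbc
  have := h.card_le_of_exchange (singleton_subset_iff.2 hp) (insert_subset hb
    (singleton_subset_iff.2 hc)) (by
      simp only [mem_insert, mem_singleton]
      rintro _ (rfl | rfl) _ (rfl | rfl) hne
      exacts [absurd rfl hne, hbc, hbc.symm, absurd rfl hne])
    (by simpa [covered] using ⟨hbp, hcp⟩)
  rw [card_pair (hbc.ne (h.nonempty hb).ne_empty), card_singleton] at this
  omega

theorem false_of_disjoint_of_inter_covered_subset (h : IsMaxPPC B P) (hp : p ∈ P) (hq : q ∈ P)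
    (hb : b ∈ B) (hc : c ∈ B) (hd : d ∈ B) (hbpq : b ∩ covered P ⊆ p ∪ q)
    (hcpq : c ∩ covered P ⊆ p ∪ q) (hdpq : d ∩ covered P ⊆ p ∪ q)
    (hbc : Disjoint b c) (hbd : Disjoint b d) (hcd : Disjoint c d) : False := by
  have := h.card_le_of_exchange (insert_subset hp (singleton_subset_iff.2 hq))
    (insert_subset hb (insert_subset hc (singleton_subset_iff.2 hd))) (by
      simp only [mem_insert, mem_singleton]
      rintro _ (rfl | rfl | rfl) _ (rfl | rfl | rfl) hne
      all_goals first
        | exact absurd rfl hne | assumption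
        | exact hbc.symm | exact hbd.symm | exact hcd.symm)
    (by simpa [covered] using ⟨hbpq, hcpq, hdpq⟩)
  have h3 : ({b, c, d} : Finset (Finset (Fin v))).card = 3 := card_eq_three.2
    ⟨b, c, d, hbc.ne (h.nonempty hb).ne_empty, hbd.ne (h.nonempty hb).ne_empty,
      hcd.ne (h.nonempty hc).ne_empty, rfl⟩
  have h2 := card_insert_le p {q}
  rw [card_singleton] at h2
  omega

/-! ### Blocks meeting `covered P` in one point -/

theorem card_sdiff_covered (h : IsMaxPPC B P) (hb : b ∈ B) :
    (b \ covered P).card = 4 - (b ∩ covered P).card := by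
  rw [← h.card_eq hb, ← card_sdiff_add_card_inter b (covered P), Nat.add_sub_cancel]

theorem card_sdiff_covered_of_mem_pointBlocks (h : IsMaxPPC B P) (hc : c ∈ pointBlocks B P x) :
    (c \ covered P).card = 3 := by
  rw [h.card_sdiff_covered (mem_pointBlocks.1 hc).1, (mem_pointBlocks.1 hc).2, card_singleton]

theorem three_mul_card_pointBlocks_add_le (h : IsMaxPPC B P) (hx : x ∈ covered P) :
    3 * (pointBlocks B P x).card + 4 * P.card ≤ v := by
  have := (h.isLinearFamily.mono (filter_subset _ B)).mul_card_le_of_forall_mem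
    (W := (covered P)ᶜ) (m := 3) (notMem_compl.2 hx) (fun c hc => mem_of_mem_pointBlocks hc)
    (fun c hc => by rw [← sdiff_eq_inter_compl, h.card_sdiff_covered_of_mem_pointBlocks hc])
  have hS := card_le_univ (covered P)
  rw [card_compl] at this
  rw [Fintype.card_fin, h.card_covered] at this hS
  exact Nat.add_le_of_le_sub hS this

/-- These blocks meet `W` only outside `covered P`, and there in pairwise disjoint sets. -/
theorem exists_mem_pointBlocks_disjoint (h : IsMaxPPC B P) {W : Finset (Fin v)} (hxW : x ∉ W)
    (hW : (W \ covered P).card < (pointBlocks B P x).card) :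
    ∃ c ∈ pointBlocks B P x, Disjoint c W := by
  by_contra! hall
  have : 1 * (pointBlocks B P x).card ≤ (W \ covered P).card :=
    (h.isLinearFamily.mono (filter_subset _ B)).mul_card_le_of_forall_mem (m := 1)
    (fun hx => hxW (mem_sdiff.1 hx).1) (fun c hc => mem_of_mem_pointBlocks hc) fun c hc => by
      obtain ⟨a, hac, haW⟩ := not_disjoint_iff.1 (hall c hc)
      refine one_le_card.2 ⟨a, mem_inter.2 ⟨hac, mem_sdiff.2 ⟨haW, fun ha => hxW ?_⟩⟩⟩
      have : a ∈ c ∩ covered P := mem_inter.2 ⟨hac, ha⟩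
      rw [(mem_pointBlocks.1 hc).2, mem_singleton] at this
      exact this ▸ haW
  omega

/-- Otherwise a block at `y` and a block at `x` avoiding its three points outside `covered P`
would replace `p`. -/
theorem pointBlocks_eq_empty (h : IsMaxPPC B P) (hp : p ∈ P) (hx : x ∈ p) (hy : y ∈ p)
    (hxy : x ≠ y) (h4 : 4 ≤ (pointBlocks B P x).card) : pointBlocks B P y = ∅ := by
  refine eq_empty_of_forall_notMem fun d hd => ?_
  have hxd : x ∉ d := fun hxd => hxy <| mem_singleton.1 <|
    (mem_pointBlocks.1 hd).2 ▸ mem_inter.2 ⟨hxd, subset_covered hp hx⟩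
  obtain ⟨c, hc, hcd⟩ := h.exists_mem_pointBlocks_disjoint hxd
    (by rw [h.card_sdiff_covered_of_mem_pointBlocks hd]; omega)
  exact h.not_disjoint_of_inter_covered_subset hp (mem_pointBlocks.1 hc).1
    (mem_pointBlocks.1 hd).1 (inter_covered_subset_of_mem_pointBlocks hc hx)
    (inter_covered_subset_of_mem_pointBlocks hd hy) hcd

theorem sum_card_pointBlocks_eq (h : IsMaxPPC B P) (hp : p ∈ P) (hx : x ∈ p)
    (h4 : 4 ≤ (pointBlocks B P x).card) :
    ∑ y ∈ p, (pointBlocks B P y).card = (pointBlocks B P x).card :=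
  sum_eq_single_of_mem x hx fun y hy hyx => by
    rw [h.pointBlocks_eq_empty hp hx hy (Ne.symm hyx) h4, card_empty]

theorem three_mul_sum_card_pointBlocks_add_le (h : IsMaxPPC B P) (hp : p ∈ heavyBlocks B P) :
    3 * ∑ x ∈ p, (pointBlocks B P x).card + 4 * P.card ≤ v := by
  obtain ⟨hpP, x, hx, h6⟩ := mem_filter.1 hp
  rw [h.sum_card_pointBlocks_eq hpP hx (by omega)]
  exact h.three_mul_card_pointBlocks_add_le (subset_covered hpP hx)

theorem sum_card_pointBlocks_le (h : IsMaxPPC B P) (hp : p ∈ P) (hl : p ∉ heavyBlocks B P) :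
    ∑ x ∈ p, (pointBlocks B P x).card ≤ 12 := by
  have h5 : ∀ x ∈ p, (pointBlocks B P x).card ≤ 5 := fun x hx => by
    by_contra! h6
    exact hl (mem_filter.2 ⟨hp, x, hx, h6⟩)
  by_cases h4 : ∃ x ∈ p, 4 ≤ (pointBlocks B P x).card
  · obtain ⟨x, hx, h4⟩ := h4
    rw [h.sum_card_pointBlocks_eq hp hx h4]
    linarith [h5 x hx]
  · calc ∑ x ∈ p, (pointBlocks B P x).card ≤ p.card • 3 :=
          sum_le_card_nsmul _ _ _ fun x hx => by
            by_contra! h3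
            exact h4 ⟨x, hx, h3⟩
      _ = 12 := by rw [h.card_eq (h.mem_of_mem hp), smul_eq_mul]

theorem three_mul_card_filter_card_inter_covered_eq_one_add_le (h : IsMaxPPC B P) :
    3 * (B.filter fun b => (b ∩ covered P).card = 1).card +
        (4 * P.card + 36) * (heavyBlocks B P).card ≤
      v * (heavyBlocks B P).card + 36 * P.card := by
  have hpt : ∀ p ∈ P, 3 * ∑ x ∈ p, (pointBlocks B P x).card +
      (if p ∈ heavyBlocks B P then 4 * P.card + 36 else 0) ≤
      (if p ∈ heavyBlocks B P then v else 0) + 36 := fun p hp => by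
    split_ifs with hH
    · linarith [h.three_mul_sum_card_pointBlocks_add_le hH]
    · linarith [h.sum_card_pointBlocks_le hp hH]
  have := sum_le_sum hpt
  simp only [sum_add_distrib, ← mul_sum, sum_ite_mem, sum_const, smul_eq_mul] at this
  rw [inter_eq_right.2 heavyBlocks_subset] at this
  linarith [card_filter_card_inter_covered_eq_one_le B P]

/-! ### Blocks meeting `covered P` in two points -/

theorem card_inter_covered_le (h : IsMaxPPC B P) (hb : b ∈ B) : (b ∩ covered P).card ≤ 4 :=
  h.card_eq hb ▸ card_le_card inter_subset_left

/-- Count pairs of points of `covered P` inside blocks: blocks of `P` use up `6 * P.card` of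
them, blocks meeting `covered P` in at least three points use at least three each. -/
theorem three_mul_card_add_le_choose_two (h : IsMaxPPC B P) :
    3 * B.card + 3 * P.card ≤ 3 * (B.filter fun b => (b ∩ covered P).card = 1).card +
      2 * (pairBlocks B P).card + (4 * P.card).choose 2 := by
  have hpairs := h.isLinearFamily.sum_choose_two_le (covered P)
  have hP : ∑ p ∈ P, (p ∩ covered P).card.choose 2 = 6 * P.card := by
    rw [mul_comm, ← smul_eq_mul, ← sum_const]
    exact sum_congr rfl fun p hp => by
      rw [inter_covered_of_mem hp, h.card_eq (h.mem_of_mem hp)]; rfl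
  rw [h.card_covered, ← sum_sdiff h.isPPC.1, hP] at hpairs
  have hpt : ∀ b ∈ B \ P, 3 ≤ 3 * (if (b ∩ covered P).card = 1 then 1 else 0) +
      (b ∩ covered P).card.choose 2 + 2 * (if (b ∩ covered P).card = 2 then 1 else 0) := by
    intro b hb
    have h1 := card_pos.2 (h.inter_covered_nonempty (mem_sdiff.1 hb).1)
    have h4 := h.card_inter_covered_le (mem_sdiff.1 hb).1
    interval_cases (b ∩ covered P).card <;> decide
  have hsum := sum_le_sum hpt
  rw [sum_add_distrib, sum_add_distrib, ← mul_sum, ← mul_sum, ← card_filter, ← card_filter,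
    sum_const, smul_eq_mul] at hsum
  have hA := card_le_card (filter_subset_filter (fun b => (b ∩ covered P).card = 1)
    (sdiff_subset : B \ P ⊆ B))
  have hM : ((B \ P).filter fun b => (b ∩ covered P).card = 2).card ≤ (pairBlocks B P).card :=
    card_le_card (filter_subset_filter _ sdiff_subset)
  have hBP := card_sdiff_add_card_eq_card h.isPPC.1
  omega

theorem notMem_of_card_inter_covered_ne (h : IsMaxPPC B P) (hb : (b ∩ covered P).card ≠ 4) :
    b ∉ P := fun hbP => hb (by rw [inter_covered_of_mem hbP, h.card_eq (h.mem_of_mem hbP)])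

theorem eq_of_mem_inter_of_mem_pairBlocksBetween (h : IsMaxPPC B P) (hp : p ∈ P)
    (hb : b ∈ pairBlocksBetween B P p q) (hy : y ∈ b ∩ p) (hz : z ∈ b ∩ p) : y = z := by
  have hbp : b ≠ p := fun he => h.notMem_of_card_inter_covered_ne (by
    rw [card_inter_covered_of_mem_pairBlocksBetween hb]; decide) (he ▸ hp)
  exact card_le_one.1 (h.card_inter_le_one (mem_of_mem_pairBlocksBetween hb)
    (h.mem_of_mem hp) hbp) y hy z hz

theorem inter_covered_eq_of_mem_pairBlocksBetween (h : IsMaxPPC B P) (hp : p ∈ P) (hq : q ∈ P)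
    (hpq : p ≠ q) (hb : b ∈ pairBlocksBetween B P p q) : b ∩ covered P = b ∩ (p ∪ q) := by
  refine (eq_of_subset_of_card_le (inter_subset_inter_left
    (union_subset (subset_covered hp) (subset_covered hq))) ?_).symm
  rw [card_inter_covered_of_mem_pairBlocksBetween hb, inter_union_distrib_left,
    card_union_of_disjoint (disjoint_of_subset_left inter_subset_right
      (disjoint_of_subset_right inter_subset_right (h.disjoint hp hq hpq)))]
  have := card_pos.2 (inter_left_nonempty_of_mem_pairBlocksBetween hb)
  have := card_pos.2 (inter_right_nonempty_of_mem_pairBlocksBetween hb)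
  omega

theorem disjoint_inter_covered_of_mem_pairBlocksBetween (h : IsMaxPPC B P) (hp : p ∈ P)
    (hq : q ∈ P) (hpq : p ≠ q) (hb : b ∈ pairBlocksBetween B P p q)
    (hc : c ∈ pairBlocksBetween B P p q) (hzb : z ∈ b) (hz : z ∈ p) (hzc : z ∉ c) (hyc : y ∈ c)
    (hy : y ∈ q) (hyb : y ∉ b) : Disjoint (b ∩ covered P) (c ∩ covered P) := by
  rw [h.inter_covered_eq_of_mem_pairBlocksBetween hp hq hpq hb,
    h.inter_covered_eq_of_mem_pairBlocksBetween hp hq hpq hc]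
  refine disjoint_left.2 fun a hab hac => ?_
  rcases mem_union.1 (mem_inter.1 hab).2 with hap | haq
  · exact hzc (h.eq_of_mem_inter_of_mem_pairBlocksBetween hp hb
      (mem_inter.2 ⟨(mem_inter.1 hab).1, hap⟩) (mem_inter.2 ⟨hzb, hz⟩) ▸ (mem_inter.1 hac).1)
  · rw [pairBlocksBetween_comm] at hc
    exact hyb (h.eq_of_mem_inter_of_mem_pairBlocksBetween hq hc
      (mem_inter.2 ⟨(mem_inter.1 hac).1, haq⟩) (mem_inter.2 ⟨hyc, hy⟩) ▸ (mem_inter.1 hab).1)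

theorem card_sdiff_covered_of_mem_pairBlocksBetween (h : IsMaxPPC B P)
    (hb : b ∈ pairBlocksBetween B P p q) : (b \ covered P).card = 2 := by
  rw [h.card_sdiff_covered (mem_of_mem_pairBlocksBetween hb),
    card_inter_covered_of_mem_pairBlocksBetween hb]

theorem card_filter_mem_pairBlocksBetween_le (h : IsMaxPPC B P) (hp : p ∈ P) (hq : q ∈ P)
    (hpq : p ≠ q) (hz : z ∈ p) : ((pairBlocksBetween B P p q).filter (z ∈ ·)).card ≤ 4 := by
  have hF : IsLinearFamily ((pairBlocksBetween B P p q).filter (z ∈ ·)) :=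
    h.isLinearFamily.mono ((filter_subset _ _).trans pairBlocksBetween_subset)
  have := hF.mul_card_le_of_forall_mem (W := q) (m := 1)
    (disjoint_left.1 (h.disjoint hp hq hpq) hz) (fun b hb => (mem_filter.1 hb).2)
    fun b hb => card_pos.2 (inter_right_nonempty_of_mem_pairBlocksBetween (filter_subset _ _ hb))
  rwa [one_mul, h.card_eq (h.mem_of_mem hq)] at this

theorem card_pairBlocksBetween_le (h : IsMaxPPC B P) (hp : p ∈ P) (hq : q ∈ P) (hpq : p ≠ q) :
    (pairBlocksBetween B P p q).card ≤ 16 :=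
  calc _ ≤ ∑ z ∈ p, ((pairBlocksBetween B P p q).filter (z ∈ ·)).card :=
        card_le_sum_card_filter_mem fun _ hb => inter_left_nonempty_of_mem_pairBlocksBetween hb
    _ ≤ p.card • 4 := sum_le_card_nsmul _ _ _ fun z hz =>
        h.card_filter_mem_pairBlocksBetween_le hp hq hpq hz
    _ = 16 := by rw [h.card_eq (h.mem_of_mem hp)]; rfl

theorem card_sdiff_covered_union_add_le (h : IsMaxPPC B P) (hb : b ∈ B) (hc : c ∈ B) :
    ((b ∪ c) \ covered P).card + (b ∩ covered P).card + (c ∩ covered P).card ≤ 8 := by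
  have := card_union_le (b \ covered P) (c \ covered P)
  rw [h.card_sdiff_covered hb, h.card_sdiff_covered hc, ← union_sdiff_distrib] at this
  have := h.card_inter_covered_le hb
  have := h.card_inter_covered_le hc
  omega

/-- Otherwise `b`, `c` and a block at `x` avoiding both would replace `p` and `q`. -/
theorem not_disjoint_sdiff_covered (h : IsMaxPPC B P) (hp : p ∈ P) (hq : q ∈ P) (hpq : p ≠ q)
    (hx : x ∈ p) (h6 : 6 ≤ (pointBlocks B P x).card) (hb : b ∈ pairBlocksBetween B P p q)
    (hc : c ∈ pairBlocksBetween B P p q) (hxb : x ∉ b) (hxc : x ∉ c)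
    (htr : Disjoint (b ∩ covered P) (c ∩ covered P)) : ¬Disjoint b (c \ covered P) := by
  intro hbc'
  have hbc : Disjoint b c := disjoint_left.2 fun a hab hac => by
    by_cases ha : a ∈ covered P
    · exact disjoint_left.1 htr (mem_inter.2 ⟨hab, ha⟩) (mem_inter.2 ⟨hac, ha⟩)
    · exact disjoint_left.1 hbc' hab (mem_sdiff.2 ⟨hac, ha⟩)
  have hbB := mem_of_mem_pairBlocksBetween hb
  have hcB := mem_of_mem_pairBlocksBetween hc
  have hW := h.card_sdiff_covered_union_add_le hbB hcB
  rw [card_inter_covered_of_mem_pairBlocksBetween hb,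
    card_inter_covered_of_mem_pairBlocksBetween hc] at hW
  obtain ⟨d, hd, hdbc⟩ := h.exists_mem_pointBlocks_disjoint (x := x) (W := b ∪ c)
    (by simp [hxb, hxc]) (by omega)
  rw [disjoint_union_right] at hdbc
  exact h.false_of_disjoint_of_inter_covered_subset hp hq hbB hcB (mem_pointBlocks.1 hd).1
    (h.inter_covered_eq_of_mem_pairBlocksBetween hp hq hpq hb ▸ inter_subset_right)
    (h.inter_covered_eq_of_mem_pairBlocksBetween hp hq hpq hc ▸ inter_subset_right)
    ((inter_covered_subset_of_mem_pointBlocks hd hx).trans subset_union_left)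
    hbc hdbc.1.symm hdbc.2.symm

/-- Otherwise at least three of the four blocks through `z` miss the point of `b₀` in `q`; each of
them then meets one of the two points of `b₀` outside `covered P`, though they are pairwise
disjoint there. -/
theorem mem_of_four_le_card_filter (h : IsMaxPPC B P) (hp : p ∈ P) (hq : q ∈ P) (hpq : p ≠ q)
    (hx : x ∈ p) (h6 : 6 ≤ (pointBlocks B P x).card) (hz : z ∈ p)
    (h4 : 4 ≤ (((pairBlocksBetween B P p q).filter (x ∉ ·)).filter (z ∈ ·)).card)
    (hb₀ : b₀ ∈ pairBlocksBetween B P p q) (hxb₀ : x ∉ b₀) : z ∈ b₀ := by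
  by_contra hzb₀
  obtain ⟨y, hy⟩ := inter_right_nonempty_of_mem_pairBlocksBetween hb₀
  set K := ((pairBlocksBetween B P p q).filter (x ∉ ·)).filter fun b => z ∈ b ∧ y ∉ b
  have hzy : z ≠ y := fun he => disjoint_left.1 (h.disjoint hp hq hpq) hz (he ▸ (mem_inter.1 hy).2)
  have hK : 3 ≤ K.card := by
    have hy1 : ((pairBlocksBetween B P p q).filter fun b => z ∈ b ∧ y ∈ b).card ≤ 1 :=
      card_le_one.2 fun b hb c hc => h.isLinearFamily.eq_of_mem_of_mem
        (mem_of_mem_pairBlocksBetween (mem_filter.1 hb).1)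
        (mem_of_mem_pairBlocksBetween (mem_filter.1 hc).1) hzy
        (mem_filter.1 hb).2.1 (mem_filter.1 hb).2.2 (mem_filter.1 hc).2.1 (mem_filter.1 hc).2.2
    have hsub : ((pairBlocksBetween B P p q).filter (x ∉ ·)).filter (z ∈ ·) ⊆
        K ∪ (pairBlocksBetween B P p q).filter fun b => z ∈ b ∧ y ∈ b := fun b hb => by
      simp only [K, mem_union, mem_filter] at hb ⊢
      tauto
    have := (card_le_card hsub).trans (card_union_le _ _)
    omega
  have hK2 : 1 * K.card ≤ (b₀ \ covered P).card :=
    (h.isLinearFamily.mono ((filter_subset _ _).trans ((filter_subset _ _).trans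
      pairBlocksBetween_subset))).mul_card_le_of_forall_mem (z := z)
      (fun hz₀ => hzb₀ (mem_sdiff.1 hz₀).1) (fun b hb => (mem_filter.1 hb).2.1) fun b hb => by
        obtain ⟨⟨hb, hxb⟩, hzb, hyb⟩ := by simpa only [K, mem_filter] using hb
        exact card_pos.2 (not_disjoint_iff_nonempty_inter.1 (h.not_disjoint_sdiff_covered
          hp hq hpq hx h6 hb hb₀ hxb hxb₀ (h.disjoint_inter_covered_of_mem_pairBlocksBetween
            hp hq hpq hb hb₀ hzb hz hzb₀ (mem_inter.1 hy).1 (mem_inter.1 hy).2 hyb)))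
  rw [h.card_sdiff_covered_of_mem_pairBlocksBetween hb₀] at hK2
  omega

theorem card_filter_notMem_pairBlocksBetween_le (h : IsMaxPPC B P) (hp : p ∈ P) (hq : q ∈ P)
    (hpq : p ≠ q) (hx : x ∈ p) (h6 : 6 ≤ (pointBlocks B P x).card) :
    ((pairBlocksBetween B P p q).filter (x ∉ ·)).card ≤ 9 := by
  set F := (pairBlocksBetween B P p q).filter (x ∉ ·)
  by_cases h4 : ∃ z ∈ p, 4 ≤ (F.filter (z ∈ ·)).card
  · obtain ⟨z, hz, h4⟩ := h4
    calc F.card ≤ ((pairBlocksBetween B P p q).filter (z ∈ ·)).card :=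
          card_le_card fun b hb => mem_filter.2 ⟨(mem_filter.1 hb).1,
            h.mem_of_four_le_card_filter hp hq hpq hx h6 hz h4 (mem_filter.1 hb).1
              (mem_filter.1 hb).2⟩
      _ ≤ 9 := (h.card_filter_mem_pairBlocksBetween_le hp hq hpq hz).trans (by norm_num)
  · push Not at h4
    calc F.card ≤ ∑ z ∈ p.erase x, (F.filter (z ∈ ·)).card :=
          card_le_sum_card_filter_mem fun b hb => by
            obtain ⟨z, hz⟩ := inter_left_nonempty_of_mem_pairBlocksBetween (mem_filter.1 hb).1
            refine ⟨z, mem_inter.2 ⟨(mem_inter.1 hz).1, mem_erase.2 ⟨?_, (mem_inter.1 hz).2⟩⟩⟩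
            rintro rfl
            exact (mem_filter.1 hb).2 (mem_inter.1 hz).1
      _ ≤ (p.erase x).card • 3 := sum_le_card_nsmul _ _ _ fun z hz =>
          Nat.le_of_lt_succ (h4 z (mem_of_mem_erase hz))
      _ = 9 := by rw [card_erase_of_mem hx, h.card_eq (h.mem_of_mem hp)]; rfl

theorem card_pairBlocksBetween_le_of_mem_heavyBlocks (h : IsMaxPPC B P) (hp : p ∈ heavyBlocks B P)
    (hq : q ∈ P) (hpq : p ≠ q) : (pairBlocksBetween B P p q).card ≤ 13 := by
  obtain ⟨hpP, x, hx, h6⟩ := mem_filter.1 hp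
  rw [← card_filter_add_card_filter_not (x ∈ ·)]
  have := h.card_filter_mem_pairBlocksBetween_le hpP hq hpq hx
  have := h.card_filter_notMem_pairBlocksBetween_le hpP hq hpq hx h6
  omega

/-- Otherwise `b`, a block at `y` avoiding `b` and a block at `x` avoiding both would replace `p`
and `q`. -/
theorem mem_or_mem_of_mem_pairBlocksBetween (h : IsMaxPPC B P) (hp : p ∈ P) (hq : q ∈ P)
    (hpq : p ≠ q) (hx : x ∈ p) (hy : y ∈ q) (h6x : 6 ≤ (pointBlocks B P x).card)
    (h6y : 6 ≤ (pointBlocks B P y).card) (hb : b ∈ pairBlocksBetween B P p q) :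
    x ∈ b ∨ y ∈ b := by
  by_contra! hxyb
  have hbB := mem_of_mem_pairBlocksBetween hb
  obtain ⟨d, hd, hdb⟩ := h.exists_mem_pointBlocks_disjoint hxyb.2
    (by rw [h.card_sdiff_covered_of_mem_pairBlocksBetween hb]; omega)
  have hdB := (mem_pointBlocks.1 hd).1
  have hxd : x ∉ d := fun hxd => disjoint_left.1 (h.disjoint hp hq hpq) hx <|
    mem_singleton.1 ((mem_pointBlocks.1 hd).2 ▸ mem_inter.2 ⟨hxd, subset_covered hp hx⟩) ▸ hy
  have hW := h.card_sdiff_covered_union_add_le hbB hdB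
  rw [card_inter_covered_of_mem_pairBlocksBetween hb, (mem_pointBlocks.1 hd).2,
    card_singleton] at hW
  obtain ⟨c, hc, hcbd⟩ := h.exists_mem_pointBlocks_disjoint (x := x) (W := b ∪ d)
    (by simp [hxyb.1, hxd]) (by omega)
  rw [disjoint_union_right] at hcbd
  exact h.false_of_disjoint_of_inter_covered_subset hp hq hbB (mem_pointBlocks.1 hc).1 hdB
    (h.inter_covered_eq_of_mem_pairBlocksBetween hp hq hpq hb ▸ inter_subset_right)
    ((inter_covered_subset_of_mem_pointBlocks hc hx).trans subset_union_left)
    ((inter_covered_subset_of_mem_pointBlocks hd hy).trans subset_union_right)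
    hcbd.1.symm hdb.symm hcbd.2

theorem card_pairBlocksBetween_le_of_mem_heavyBlocks_of_mem_heavyBlocks (h : IsMaxPPC B P)
    (hp : p ∈ heavyBlocks B P) (hq : q ∈ heavyBlocks B P) (hpq : p ≠ q) :
    (pairBlocksBetween B P p q).card ≤ 8 := by
  obtain ⟨hpP, x, hx, h6x⟩ := mem_filter.1 hp
  obtain ⟨hqP, y, hy, h6y⟩ := mem_filter.1 hq
  have hsub : pairBlocksBetween B P p q ⊆
      (pairBlocksBetween B P p q).filter (x ∈ ·) ∪ (pairBlocksBetween B P q p).filter (y ∈ ·) :=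
    fun b hb => by
      rcases h.mem_or_mem_of_mem_pairBlocksBetween hpP hqP hpq hx hy h6x h6y hb with hxb | hyb
      exacts [mem_union_left _ (mem_filter.2 ⟨hb, hxb⟩),
        mem_union_right _ (mem_filter.2 ⟨pairBlocksBetween_comm ▸ hb, hyb⟩)]
  have := (card_le_card hsub).trans (card_union_le _ _)
  have := h.card_filter_mem_pairBlocksBetween_le hpP hqP hpq hx
  have := h.card_filter_mem_pairBlocksBetween_le hqP hpP hpq.symm hy
  omega

theorem card_pairBlocksBetween_add_le (h : IsMaxPPC B P) (hp : p ∈ P) (hq : q ∈ P)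
    (hpq : p ≠ q) : (pairBlocksBetween B P p q).card +
      3 * (if p ∈ heavyBlocks B P then 1 else 0) + 3 * (if q ∈ heavyBlocks B P then 1 else 0)
      ≤ 16 := by
  split_ifs with hpH hqH hqH
  · linarith [h.card_pairBlocksBetween_le_of_mem_heavyBlocks_of_mem_heavyBlocks hpH hqH hpq]
  · linarith [h.card_pairBlocksBetween_le_of_mem_heavyBlocks hpH hq hpq]
  · linarith [pairBlocksBetween_comm (B := B) (P := P) (p := p) (q := q) ▸
      h.card_pairBlocksBetween_le_of_mem_heavyBlocks hqH hp hpq.symm]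
  · linarith [h.card_pairBlocksBetween_le hp hq hpq]

theorem card_filter_inter_nonempty (h : IsMaxPPC B P) (hb : b ∈ B) (hbP : b ∉ P) :
    (P.filter fun p => (b ∩ p).Nonempty).card = (b ∩ covered P).card := by
  rw [covered, inter_biUnion,
    card_biUnion (h.pairwiseDisjoint.mono_on fun _ _ => inter_subset_right), card_filter]
  refine sum_congr rfl fun p hp => ?_
  change _ = (b ∩ p).card
  have := h.card_inter_le_one hb (h.mem_of_mem hp) fun he => hbP (he ▸ hp)
  split_ifs with hne
  · exact le_antisymm (card_pos.2 hne) this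
  · rw [not_nonempty_iff_eq_empty.1 hne, card_empty]

theorem sum_card_pairBlocksBetween (h : IsMaxPPC B P) :
    ∑ z ∈ P.offDiag, (pairBlocksBetween B P z.1 z.2).card = 2 * (pairBlocks B P).card := by
  simp only [pairBlocksBetween, card_filter]
  rw [sum_comm, mul_comm, ← smul_eq_mul, ← sum_const]
  refine sum_congr rfl fun b hb => ?_
  obtain ⟨hbB, hb2⟩ := mem_filter.1 hb
  rw [← card_filter]
  have hoff : P.offDiag.filter (fun z => (b ∩ z.1).Nonempty ∧ (b ∩ z.2).Nonempty) =
      (P.filter fun p => (b ∩ p).Nonempty).offDiag := by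
    ext z
    simp only [mem_filter, mem_offDiag]
    tauto
  rw [hoff, offDiag_card, h.card_filter_inter_nonempty hbB
    (h.notMem_of_card_inter_covered_ne (by omega)), hb2]

theorem two_mul_card_pairBlocks_add_le (h : IsMaxPPC B P) :
    2 * (pairBlocks B P).card + 6 * (P.card * (heavyBlocks B P).card) + 16 * P.card ≤
      16 * (P.card * P.card) + 6 * (heavyBlocks B P).card := by
  have hg : ∑ p ∈ P, (if p ∈ heavyBlocks B P then 1 else 0) = (heavyBlocks B P).card := by
    simp only [sum_boole, filter_mem_eq_inter, inter_eq_right.2 heavyBlocks_subset, Nat.cast_id]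
  have hsum := sum_le_sum fun z hz => h.card_pairBlocksBetween_add_le
    (mem_offDiag.1 hz).1 (mem_offDiag.1 hz).2.1 (mem_offDiag.1 hz).2.2
  rw [sum_add_distrib, sum_add_distrib, h.sum_card_pairBlocksBetween, ← mul_sum, ← mul_sum,
    sum_const, smul_eq_mul, offDiag_card] at hsum
  have h1 := sum_offDiag_fst_add_sum P fun p => if p ∈ heavyBlocks B P then 1 else 0
  have h2 := sum_offDiag_snd_add_sum P fun p => if p ∈ heavyBlocks B P then 1 else 0
  rw [hg, smul_eq_mul] at h1 h2
  have := Nat.le_mul_self P.card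
  omega

theorem three_mul_card_add_le (h : IsMaxPPC B P) (hv : 9 * P.card + 31 ≤ v) :
    3 * B.card + 16 * P.card ≤ P.card * v + 15 * P.card ^ 2 := by
  have hB := h.three_mul_card_add_le_choose_two
  have hA := h.three_mul_card_filter_card_inter_covered_eq_one_add_le
  have hM := h.two_mul_card_pairBlocks_add_le
  have hk := card_le_card (heavyBlocks_subset (B := B) (P := P))
  have hkk := Nat.le_mul_self (heavyBlocks B P).card
  qify at hB hA hM hk hkk hv ⊢
  rw [Nat.cast_choose_two] at hB
  push_cast at hB
  nlinarith [mul_nonneg (sub_nonneg.2 hk) (sub_nonneg.2 hv),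
    mul_nonneg ((heavyBlocks B P).card.cast_nonneg : (0 : ℚ) ≤ _) (sub_nonneg.2 hk)]

end IsMaxPPC

theorem stmt8_general (ρ v : ℕ) (hv : 9 * ρ + 31 ≤ v) :
    (beta ρ v 4 : ℚ) ≤ (ρ : ℚ) * v / 3 + 5 * (ρ : ℚ) ^ 2 - 16 * ρ / 3 := by
  have hv' : (9 * ρ + 31 : ℚ) ≤ v := by exact_mod_cast hv
  refine Nat.cast_sSup_le (by nlinarith [mul_nonneg ρ.cast_nonneg (sub_nonneg.2 hv')]) ?_
  rintro _ ⟨B, hB, ⟨⟨P, hP, rfl⟩, hmax⟩, rfl⟩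
  have := (IsMaxPPC.mk hB hP hmax).three_mul_card_add_le hv
  have : (3 * B.card + 16 * P.card : ℚ) ≤ P.card * v + 15 * P.card ^ 2 := by exact_mod_cast this
  linarith

theorem stmt8 (ρ v : ℕ) (hρ : 1 ≤ ρ) (hv : 9 * ρ + 31 ≤ v) :
    (beta ρ v 4 : ℚ) ≤ (ρ : ℚ) * v / 3 + 5 * (ρ : ℚ) ^ 2 - 16 * ρ / 3 :=
  stmt8_general ρ v hv
end

section
/- If v ≥ (27ρ² − 3ρ + 60)/2, then every (v,4)-packing whose maximum partial parallel class has size ρ has at most ρv/3 − ρ(ρ+1)/6 blocks; i.e., β(ρ,v,4) ≤ ρv/3 − ρ(ρ+1)/6. -/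
/-!
Fix a maximum partial parallel class `P` and let `S` be the set of the `4ρ` points it covers;
by maximality every block meets `S`. A pendant at `x ∈ S` is a block meeting `S` only in `x`.
Two disjoint pendants at two points of one block of `P` could replace that block, so they
always meet; hence once two points of a block carry pendants, each carries at most three, and
a block of `P` has at most one heavy point (one with more than twelve pendants). Let `R` be the
`h` heavy points and `m = ρ - h` the number of light blocks of `P`.

The blocks through `R` number at most `hv/3 - h(h+1)/6`: the blocks through a new point that
miss the earlier ones are disjoint triples outside them. A block missing `R` is a light block,
a pendant at a point of a light block (at most twelve per light block), or meets `S` in two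
points one of which lies in a light block: otherwise, choosing greedily disjoint pendants at
the heavy points of the blocks it meets, we could again enlarge `P`. Such a block is determined
by that pair, which leaves at most `12mh + 8m(m-1)` of them, and the total is at most
`ρv/3 - ρ(ρ+1)/6` as soon as `2v ≥ 74h + 49m + 31`.
-/

open Finset

section DisjointFamilies

variable {ι β α : Type*} [DecidableEq α]

theorem Finset.card_le_card_of_forall_not_disjoint (φ : β → Finset α) {𝒜 : Finset β}
    {X : Finset α} (h𝒜 : (𝒜 : Set β).PairwiseDisjoint φ)
    (hX : ∀ a ∈ 𝒜, ¬Disjoint (φ a) X) : #𝒜 ≤ #X :=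
  calc #𝒜 ≤ #(𝒜.biUnion fun a => φ a ∩ X) :=
        card_le_card_biUnion (h𝒜.mono fun _ => inter_subset_left)
          fun a ha => not_disjoint_iff_nonempty_inter.1 (hX a ha)
    _ ≤ #X := card_le_card (biUnion_subset.2 fun _ _ => inter_subset_right)

theorem Finset.exists_mem_disjoint_of_card_lt (φ : β → Finset α) {𝒜 : Finset β}
    {X : Finset α} (h𝒜 : (𝒜 : Set β).PairwiseDisjoint φ) (hX : #X < #𝒜) :
    ∃ a ∈ 𝒜, Disjoint (φ a) X := by
  by_contra! h
  exact hX.not_ge (card_le_card_of_forall_not_disjoint φ h𝒜 h)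

theorem Finset.exists_pairwiseDisjoint_choice [DecidableEq ι] [Nonempty β] (φ : β → Finset α)
    (s : ℕ) (F : Finset α) (𝒜 : ι → Finset β) (T : Finset ι)
    (hφ : ∀ t ∈ T, ∀ a ∈ 𝒜 t, #(φ a) ≤ s)
    (h𝒜 : ∀ t ∈ T, (𝒜 t : Set β).PairwiseDisjoint φ)
    (hcard : ∀ t ∈ T, #F + s * #T < #(𝒜 t)) :
    ∃ f : ι → β, (∀ t ∈ T, f t ∈ 𝒜 t ∧ Disjoint (φ (f t)) F) ∧
      (T : Set ι).PairwiseDisjoint (φ ∘ f) := by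
  induction T using Finset.induction_on with
  | empty => exact ⟨fun _ => Classical.arbitrary _, by simp, by simp⟩
  | @insert t T htT ih =>
    simp only [forall_mem_insert, card_insert_of_notMem htT] at hφ h𝒜 hcard
    obtain ⟨f, hf, hfT⟩ := ih hφ.2 h𝒜.2 fun u hu => by linarith [hcard.2 u hu]
    set X := F ∪ T.biUnion (φ ∘ f)
    have hX : #X < #(𝒜 t) :=
      calc #X ≤ #F + ∑ u ∈ T, #(φ (f u)) :=
            (card_union_le _ _).trans (by grw [card_biUnion_le]; rfl)
        _ ≤ #F + ∑ _u ∈ T, s := by grw [sum_le_sum fun u hu => hφ.2 u hu _ (hf u hu).1]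
        _ = #F + s * #T := by rw [sum_const, smul_eq_mul, mul_comm]
        _ < #(𝒜 t) := by linarith [hcard.1]
    obtain ⟨a, ha, haX⟩ := exists_mem_disjoint_of_card_lt φ h𝒜.1 hX
    have hupd : ∀ u ∈ T, Function.update f t a u = f u := fun u hu =>
      Function.update_of_ne (ne_of_mem_of_not_mem hu htT) _ _
    refine ⟨Function.update f t a, ?_, ?_⟩
    · simp only [forall_mem_insert, Function.update_self]
      refine ⟨⟨ha, disjoint_union_right.1 haX |>.1⟩, fun u hu => ?_⟩
      rw [hupd u hu]
      exact hf u hu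
    · rw [coe_insert]
      refine Set.PairwiseDisjoint.insert ?_ fun u hu hne => ?_
      · intro u hu w hw huw
        simpa only [Function.onFun, Function.comp_apply, hupd u hu, hupd w hw] using hfT hu hw huw
      · simp only [Function.comp_apply, Function.update_self, hupd u hu]
        exact (disjoint_union_right.1 haX).2.mono_right (subset_biUnion_of_mem (φ ∘ f) hu)

theorem Finset.disjoint_of_disjoint_inter_of_disjoint_sdiff {a b S : Finset α}
    (hS : Disjoint (a ∩ S) (b ∩ S)) (hSc : Disjoint (a \ S) (b \ S)) : Disjoint a b := by
  refine disjoint_left.2 fun x hxa hxb => ?_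
  by_cases hx : x ∈ S
  · exact disjoint_left.1 hS (mem_inter.2 ⟨hxa, hx⟩) (mem_inter.2 ⟨hxb, hx⟩)
  · exact disjoint_left.1 hSc (mem_sdiff.2 ⟨hxa, hx⟩) (mem_sdiff.2 ⟨hxb, hx⟩)

def crossingPairs (P : Finset (Finset α)) : Finset (Finset α) :=
  {e ∈ (P.biUnion id).powersetCard 2 | ∀ b ∈ P, ¬e ⊆ b}

theorem mem_crossingPairs {P : Finset (Finset α)} {e : Finset α} :
    e ∈ crossingPairs P ↔ (e ⊆ P.biUnion id ∧ #e = 2) ∧ ∀ b ∈ P, ¬e ⊆ b := by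
  rw [crossingPairs, mem_filter, mem_powersetCard]

theorem card_crossingPairs_add_sum_choose {P : Finset (Finset α)}
    (hP : (P : Set (Finset α)).PairwiseDisjoint id) :
    #(crossingPairs P) + ∑ b ∈ P, (#b).choose 2 = (#(P.biUnion id)).choose 2 := by
  have hwithin : {e ∈ (P.biUnion id).powersetCard 2 | ¬∀ b ∈ P, ¬e ⊆ b} =
      P.biUnion (powersetCard 2) := by
    ext e
    simp only [mem_filter, mem_powersetCard, mem_biUnion, not_forall, not_not]
    constructor
    · rintro ⟨⟨-, he⟩, b, hb, heb⟩
      exact ⟨b, hb, heb, he⟩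
    · rintro ⟨b, hb, heb, he⟩
      exact ⟨⟨heb.trans (subset_biUnion_of_mem id hb), he⟩, b, hb, heb⟩
  have hdisj : (P : Set (Finset α)).PairwiseDisjoint (powersetCard 2) := by
    intro b hb b' hb' hne
    refine disjoint_left.2 fun e he he' => ?_
    obtain ⟨heb, he2⟩ := mem_powersetCard.1 he
    have hempty : e = ∅ :=
      subset_empty.1 ((disjoint_iff_inter_eq_empty.1 (hP hb hb' hne)) ▸
        subset_inter heb (mem_powersetCard.1 he').1)
    simp [hempty] at he2
  rw [crossingPairs, ← card_powersetCard,
    ← card_filter_add_card_filter_not (s := powersetCard 2 _) (fun e => ∀ b ∈ P, ¬e ⊆ b),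
    hwithin, card_biUnion hdisj]
  simp only [card_powersetCard]

end DisjointFamilies

namespace IsPacking

variable {v k : ℕ} {B : Finset (Finset (Fin v))}

theorem card_eq (hB : IsPacking v k B) {c : Finset (Fin v)} (hc : c ∈ B) : #c = k :=
  hB.1 c hc

theorem eq_of_mem_of_mem (hB : IsPacking v k B) {c d : Finset (Fin v)} (hc : c ∈ B)
    (hd : d ∈ B) {x y : Fin v} (hxy : x ≠ y) (hxc : x ∈ c) (hyc : y ∈ c) (hxd : x ∈ d)
    (hyd : y ∈ d) : c = d := by
  by_contra hne
  have hsub : {x, y} ⊆ c ∩ d := insert_subset (mem_inter.2 ⟨hxc, hxd⟩)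
    (singleton_subset_iff.2 (mem_inter.2 ⟨hyc, hyd⟩))
  have := (card_le_card hsub).trans (hB.2 c hc d hd hne)
  rw [card_pair hxy] at this
  omega

theorem card_le_card_of_forall_exists_subset (hB : IsPacking v k B)
    {C 𝒯 : Finset (Finset (Fin v))} (hC : C ⊆ B) (h𝒯 : ∀ e ∈ 𝒯, 1 < #e)
    (h : ∀ c ∈ C, ∃ e ∈ 𝒯, e ⊆ c) : #C ≤ #𝒯 :=
  card_le_card_of_forall_subsingleton (fun c e => e ⊆ c) h
    fun e he c ⟨hc, hec⟩ d ⟨hd, hed⟩ => by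
    obtain ⟨x, hx, y, hy, hxy⟩ := one_lt_card.1 (h𝒯 e he)
    exact hB.eq_of_mem_of_mem (hC hc) (hC hd) hxy (hec hx) (hec hy) (hed hx) (hed hy)

theorem card_filter_mem_disjoint_add_le (hB : IsPacking v k B) {x : Fin v} {R : Finset (Fin v)}
    (hxR : x ∉ R) : (k - 1) * #{c ∈ B | x ∈ c ∧ Disjoint c R} + #R + 1 ≤ v := by
  set A := {c ∈ B | x ∈ c ∧ Disjoint c R}
  have hA : ∀ c ∈ A, c ∈ B ∧ x ∈ c ∧ Disjoint c R := fun c hc => mem_filter.1 hc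
  have hdisj : (A : Set (Finset (Fin v))).PairwiseDisjoint (·.erase x) := by
    intro c hc d hd hne
    refine disjoint_left.2 fun y hyc hyd => hne ?_
    obtain ⟨hyx, hyc⟩ := mem_erase.1 hyc
    obtain ⟨-, hyd⟩ := mem_erase.1 hyd
    exact hB.eq_of_mem_of_mem (hA c hc).1 (hA d hd).1 hyx hyc (hA c hc).2.1 hyd (hA d hd).2.1
  have hsub : A.biUnion (·.erase x) ⊆ (insert x R)ᶜ := by
    refine biUnion_subset.2 fun c hc y hy => mem_compl.2 fun hyxR => ?_
    obtain ⟨hyx, hyc⟩ := mem_erase.1 hy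
    exact hyx ((mem_insert.1 hyxR).resolve_right (disjoint_left.1 (hA c hc).2.2 hyc))
  have hcard : #(A.biUnion (·.erase x)) = (k - 1) * #A := by
    rw [card_biUnion hdisj, sum_congr rfl fun c hc => by
      rw [card_erase_of_mem (hA c hc).2.1, hB.card_eq (hA c hc).1], sum_const, smul_eq_mul,
      mul_comm]
  have := card_le_card hsub
  rw [hcard, card_compl, Fintype.card_fin, card_insert_of_notMem hxR] at this
  have := (card_le_univ (insert x R)).trans_eq (Fintype.card_fin v)
  rw [card_insert_of_notMem hxR] at this
  omega

theorem card_filter_not_disjoint_le (hB : IsPacking v k B) (R : Finset (Fin v)) :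
    2 * (k - 1) * #{c ∈ B | ¬Disjoint c R} + #R * (#R + 1) ≤ 2 * #R * v := by
  induction R using Finset.induction_on with
  | empty => simp
  | @insert x R hxR ih =>
    have hsub : {c ∈ B | ¬Disjoint c (insert x R)} ⊆
        {c ∈ B | ¬Disjoint c R} ∪ {c ∈ B | x ∈ c ∧ Disjoint c R} := by
      intro c hc
      simp only [mem_union, mem_filter, disjoint_insert_right] at hc ⊢
      tauto
    have hsplit := (card_le_card hsub).trans (card_union_le _ _)
    have hx := hB.card_filter_mem_disjoint_add_le hxR
    rw [card_insert_of_notMem hxR]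
    nlinarith [Nat.mul_le_mul_left (2 * (k - 1)) hsplit]

end IsPacking

section MaximumPPC

variable {v : ℕ} {B P Q T : Finset (Finset (Fin v))}

def IsMaxPPC_s14 (B P : Finset (Finset (Fin v))) : Prop :=
  IsPPC B P ∧ ∀ Q, IsPPC B Q → #Q ≤ #P

theorem MaxPPCSize.exists_isMaxPPC {ρ : ℕ} (h : MaxPPCSize B ρ) :
    ∃ P, IsMaxPPC_s14 B P ∧ #P = ρ := by
  obtain ⟨⟨P, hP, rfl⟩, hmax⟩ := h
  exact ⟨P, ⟨hP, hmax⟩, rfl⟩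

theorem isPPC_iff : IsPPC B P ↔ P ⊆ B ∧ (P : Set (Finset (Fin v))).PairwiseDisjoint id :=
  Iff.rfl

theorem IsMaxPPC_s14.card_le_of_exchange (hP : IsMaxPPC_s14 B P) (hT : T ⊆ P) (hQ : IsPPC B Q)
    (hQne : ∀ q ∈ Q, q.Nonempty) (hQP : ∀ q ∈ Q, ∀ e ∈ P \ T, Disjoint q e) :
    #Q ≤ #T := by
  have hfam : Disjoint (P \ T) Q := disjoint_left.2 fun q hqP hqQ =>
    (hQne q hqQ).ne_empty (disjoint_self.1 (hQP q hqQ q hqP))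
  have hPPC : IsPPC B ((P \ T) ∪ Q) := by
    refine isPPC_iff.2 ⟨union_subset (sdiff_subset.trans hP.1.1) hQ.1, ?_⟩
    rw [coe_union]
    exact ((isPPC_iff.1 hP.1).2.subset (coe_subset.2 sdiff_subset)).union (isPPC_iff.1 hQ).2
      fun e he q hq _ => (hQP q hq e he).symm
  have := hP.2 _ hPPC
  rw [card_union_of_disjoint hfam, card_sdiff_of_subset hT] at this
  have := card_le_card hT
  omega

def coveredPoints (P : Finset (Finset (Fin v))) : Finset (Fin v) :=
  P.biUnion id

def pendants (B P : Finset (Finset (Fin v))) (x : Fin v) : Finset (Finset (Fin v)) :=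
  {c ∈ B | c ∩ coveredPoints P = {x}}

-- `12 ≥ #(c \ S) + 3 * #(c ∩ S)` for every block `c`: enough to run the greedy exchange.
def IsHeavy (B P : Finset (Finset (Fin v))) (x : Fin v) : Prop :=
  12 < #(pendants B P x)

instance : DecidablePred (IsHeavy B P) := fun _ => Nat.decLt _ _

theorem subset_coveredPoints {b : Finset (Fin v)} (hb : b ∈ P) : b ⊆ coveredPoints P :=
  subset_biUnion_of_mem id hb

theorem mem_coveredPoints {x : Fin v} : x ∈ coveredPoints P ↔ ∃ b ∈ P, x ∈ b := by
  simp [coveredPoints]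

theorem mem_pendants {x : Fin v} {c : Finset (Fin v)} :
    c ∈ pendants B P x ↔ c ∈ B ∧ c ∩ coveredPoints P = {x} :=
  mem_filter

theorem mem_inter_coveredPoints_of_mem_pendants {x : Fin v} {c : Finset (Fin v)}
    (hc : c ∈ pendants B P x) : x ∈ c ∩ coveredPoints P :=
  (mem_pendants.1 hc).2 ▸ mem_singleton_self x

theorem nonempty_of_mem_pendants {x : Fin v} {c : Finset (Fin v)} (hc : c ∈ pendants B P x) :
    c.Nonempty :=
  ⟨x, (mem_inter.1 (mem_inter_coveredPoints_of_mem_pendants hc)).1⟩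

theorem IsPPC.disjoint_of_inter_coveredPoints_eq_singleton (hP : IsPPC B P)
    {q b e : Finset (Fin v)} {z : Fin v} (hq : q ∩ coveredPoints P = {z}) (hzb : z ∈ b)
    (hb : b ∈ P) (he : e ∈ P) (heb : e ≠ b) : Disjoint q e := by
  refine disjoint_left.2 fun a haq hae => ?_
  have ha : a = z := mem_singleton.1 (hq ▸ mem_inter.2 ⟨haq, subset_coveredPoints he hae⟩)
  exact disjoint_left.1 (hP.2 e he b hb heb) hae (ha ▸ hzb)

theorem IsMaxPPC_s14.not_disjoint_of_mem_pendants (hP : IsMaxPPC_s14 B P) {b c d : Finset (Fin v)}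
    {x y : Fin v} (hb : b ∈ P) (hx : x ∈ b) (hy : y ∈ b) (hxy : x ≠ y)
    (hc : c ∈ pendants B P x) (hd : d ∈ pendants B P y) : ¬Disjoint c d := by
  intro hcd
  have hcd' : c ≠ d := fun h => hxy <| singleton_injective <|
    (mem_pendants.1 hc).2.symm.trans (h ▸ (mem_pendants.1 hd).2)
  have hQ : IsPPC B {c, d} := by
    refine ⟨insert_subset (mem_pendants.1 hc).1 (singleton_subset_iff.2 (mem_pendants.1 hd).1),
      fun e₁ h₁ e₂ h₂ hne => ?_⟩
    simp only [mem_insert, mem_singleton] at h₁ h₂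
    rcases h₁ with rfl | rfl <;> rcases h₂ with rfl | rfl
    exacts [absurd rfl hne, hcd, hcd.symm, absurd rfl hne]
  have hQP : ∀ q ∈ ({c, d} : Finset _), ∀ e ∈ P \ {b}, Disjoint q e := by
    intro q hq e he
    obtain ⟨heP, heb⟩ := mem_sdiff.1 he
    simp only [mem_insert, mem_singleton] at hq heb
    rcases hq with rfl | rfl
    exacts [hP.1.disjoint_of_inter_coveredPoints_eq_singleton (mem_pendants.1 hc).2 hx hb heP heb,
      hP.1.disjoint_of_inter_coveredPoints_eq_singleton (mem_pendants.1 hd).2 hy hb heP heb]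
  have := hP.card_le_of_exchange (singleton_subset_iff.2 hb) hQ
    (fun q hq => by
      simp only [mem_insert, mem_singleton] at hq
      rcases hq with rfl | rfl
      exacts [nonempty_of_mem_pendants hc, nonempty_of_mem_pendants hd]) hQP
  rw [card_pair hcd', card_singleton] at this
  omega

theorem IsMaxPPC_s14.exists_not_disjoint_sdiff_of_pendants (hP : IsMaxPPC_s14 B P) (hT : T ⊆ P)
    {x : Finset (Fin v) → Fin v} {f : Finset (Fin v) → Finset (Fin v)} {c : Finset (Fin v)}
    (hx : ∀ b ∈ T, x b ∈ b) (hf : ∀ b ∈ T, f b ∈ pendants B P (x b))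
    (hfT : (T : Set (Finset (Fin v))).PairwiseDisjoint ((· \ coveredPoints P) ∘ f))
    (hc : c ∈ B) (hcne : c.Nonempty) (hxc : ∀ b ∈ T, x b ∉ c)
    (hcf : ∀ b ∈ T, Disjoint (c \ coveredPoints P) (f b \ coveredPoints P)) :
    ∃ e ∈ P \ T, ¬Disjoint c e := by
  by_contra! hcP
  have hfdisj : (T : Set (Finset (Fin v))).PairwiseDisjoint f := fun b hb b' hb' hne =>
    disjoint_of_disjoint_inter_of_disjoint_sdiff
      (by
        rw [(mem_pendants.1 (hf b hb)).2, (mem_pendants.1 (hf b' hb')).2, disjoint_singleton]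
        exact fun h =>
          disjoint_left.1 (hP.1.2 b (hT hb) b' (hT hb') hne) (hx b hb) (h ▸ hx b' hb'))
      (hfT hb hb' hne)
  have hcf' : ∀ b ∈ T, Disjoint c (f b) := fun b hb =>
    disjoint_of_disjoint_inter_of_disjoint_sdiff
      (by
        rw [(mem_pendants.1 (hf b hb)).2, disjoint_singleton_right]
        exact fun h => hxc b hb (mem_inter.1 h).1)
      (hcf b hb)
  have hinj : Set.InjOn f T := fun b hb b' hb' h => by
    by_contra hne
    have hd : Disjoint (f b) (f b') := hfdisj hb hb' hne
    rw [h, disjoint_self] at hd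
    exact (nonempty_of_mem_pendants (hf b' hb')).ne_empty hd
  have hcQ : c ∉ T.image f := fun h => by
    obtain ⟨b, hb, hbc⟩ := mem_image.1 h
    exact hcne.ne_empty (disjoint_self.1 (hbc ▸ hcf' b hb))
  have hQ : IsPPC B (insert c (T.image f)) := by
    refine isPPC_iff.2
      ⟨insert_subset hc (image_subset_iff.2 fun b hb => (mem_pendants.1 (hf b hb)).1), ?_⟩
    rw [coe_insert, coe_image]
    refine ((hinj.pairwiseDisjoint_image (f := id)).2 hfdisj).insert fun _ hq _ => ?_
    obtain ⟨b, hb, rfl⟩ := hq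
    exact hcf' b hb
  have hQP : ∀ q ∈ insert c (T.image f), ∀ e ∈ P \ T, Disjoint q e := by
    intro q hq e he
    obtain ⟨heP, heT⟩ := mem_sdiff.1 he
    rcases mem_insert.1 hq with rfl | hq
    · exact hcP e he
    obtain ⟨b, hb, rfl⟩ := mem_image.1 hq
    exact hP.1.disjoint_of_inter_coveredPoints_eq_singleton (mem_pendants.1 (hf b hb)).2 (hx b hb)
      (hT hb) heP fun h => heT (h ▸ hb)
  have hQne : ∀ q ∈ insert c (T.image f), q.Nonempty := by
    intro q hq
    rcases mem_insert.1 hq with rfl | hq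
    · exact hcne
    obtain ⟨b, hb, rfl⟩ := mem_image.1 hq
    exact nonempty_of_mem_pendants (hf b hb)
  have := hP.card_le_of_exchange hT hQ hQne hQP
  rw [card_insert_of_notMem hcQ, card_image_of_injOn hinj] at this
  omega

theorem IsPPC.card_coveredPoints {k : ℕ} (hB : IsPacking v k B) (hP : IsPPC B P) :
    #(coveredPoints P) = k * #P := by
  rw [coveredPoints, card_biUnion (isPPC_iff.1 hP).2,
    sum_congr rfl fun b hb => (hB.card_eq (hP.1 hb) : #(id b) = k), sum_const, smul_eq_mul,
    mul_comm]

variable (hB : IsPacking v 4 B)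
include hB

theorem card_sdiff_coveredPoints_of_mem_pendants {x : Fin v} {c : Finset (Fin v)}
    (hc : c ∈ pendants B P x) : #(c \ coveredPoints P) = 3 := by
  have := card_inter_add_card_sdiff c (coveredPoints P)
  rw [(mem_pendants.1 hc).2, card_singleton, hB.card_eq (mem_pendants.1 hc).1] at this
  omega

theorem pairwiseDisjoint_sdiff_coveredPoints_pendants (x : Fin v) :
    (pendants B P x : Set (Finset (Fin v))).PairwiseDisjoint (· \ coveredPoints P) := by
  intro c hc d hd hne
  refine disjoint_left.2 fun y hyc hyd => hne ?_
  obtain ⟨hyc, hyS⟩ := mem_sdiff.1 hyc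
  have hxc := mem_inter_coveredPoints_of_mem_pendants hc
  have hxd := mem_inter_coveredPoints_of_mem_pendants hd
  exact hB.eq_of_mem_of_mem (mem_pendants.1 hc).1 (mem_pendants.1 hd).1
    (fun h => hyS (by rw [h]; exact (mem_inter.1 hxc).2)) hyc (mem_inter.1 hxc).1
    (mem_sdiff.1 hyd).1 (mem_inter.1 hxd).1

theorem IsMaxPPC_s14.inter_coveredPoints_nonempty (hP : IsMaxPPC_s14 B P) {c : Finset (Fin v)}
    (hc : c ∈ B) : (c ∩ coveredPoints P).Nonempty := by
  by_contra h
  rw [not_nonempty_iff_eq_empty, ← disjoint_iff_inter_eq_empty] at h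
  have hQ : IsPPC B {c} := ⟨singleton_subset_iff.2 hc, fun b₁ h₁ b₂ h₂ hne =>
    absurd ((mem_singleton.1 h₁).trans (mem_singleton.1 h₂).symm) hne⟩
  have := hP.card_le_of_exchange (empty_subset P) hQ
    (fun q hq => mem_singleton.1 hq ▸ card_pos.1 (by rw [hB.card_eq hc]; norm_num))
    (fun q hq e he => mem_singleton.1 hq ▸ h.mono_right (subset_coveredPoints (mem_sdiff.1 he).1))
  simp at this

theorem IsMaxPPC_s14.card_pendants_le_three (hP : IsMaxPPC_s14 B P) {b : Finset (Fin v)} {x y : Fin v}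
    (hb : b ∈ P) (hx : x ∈ b) (hy : y ∈ b) (hxy : x ≠ y) (hne : (pendants B P y).Nonempty) :
    #(pendants B P x) ≤ 3 := by
  obtain ⟨d, hd⟩ := hne
  rw [← card_sdiff_coveredPoints_of_mem_pendants hB hd]
  refine card_le_card_of_forall_not_disjoint _
    (pairwiseDisjoint_sdiff_coveredPoints_pendants hB x) fun c hc => ?_
  obtain ⟨p, hp⟩ := not_disjoint_iff_nonempty_inter.1
    (hP.not_disjoint_of_mem_pendants hb hx hy hxy hc hd)
  obtain ⟨hpc, hpd⟩ := mem_inter.1 hp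
  have hpS : p ∉ coveredPoints P := fun hpS => hxy <|
    (mem_singleton.1 ((mem_pendants.1 hc).2 ▸ mem_inter.2 ⟨hpc, hpS⟩)).symm.trans
      (mem_singleton.1 ((mem_pendants.1 hd).2 ▸ mem_inter.2 ⟨hpd, hpS⟩))
  exact not_disjoint_iff.2 ⟨p, mem_sdiff.2 ⟨hpc, hpS⟩, mem_sdiff.2 ⟨hpd, hpS⟩⟩

theorem IsMaxPPC_s14.card_filter_isHeavy_le_one (hP : IsMaxPPC_s14 B P) {b : Finset (Fin v)}
    (hb : b ∈ P) : #{x ∈ b | IsHeavy B P x} ≤ 1 :=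
  card_le_one.2 fun x hx y hy => by
    by_contra hxy
    obtain ⟨hxb, hxh⟩ := mem_filter.1 hx
    obtain ⟨hyb, hyh⟩ := mem_filter.1 hy
    unfold IsHeavy at hxh hyh
    have := hP.card_pendants_le_three hB hb hxb hyb hxy (card_pos.1 (by omega))
    omega

theorem IsMaxPPC_s14.not_isHeavy_of_mem_pendants (hP : IsMaxPPC_s14 B P) {b c : Finset (Fin v)}
    {x y : Fin v} (hb : b ∈ P) (hx : x ∈ b) (hy : y ∈ b) (hc : c ∈ pendants B P y)
    (hy' : ¬IsHeavy B P y) : ¬IsHeavy B P x := by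
  rcases eq_or_ne x y with rfl | hxy
  · exact hy'
  · have := hP.card_pendants_le_three hB hb hx hy hxy ⟨c, hc⟩
    unfold IsHeavy
    omega

theorem IsMaxPPC_s14.sum_card_pendants_le (hP : IsMaxPPC_s14 B P) {b : Finset (Fin v)} (hb : b ∈ P)
    (hlight : ∀ x ∈ b, ¬IsHeavy B P x) : ∑ x ∈ b, #(pendants B P x) ≤ 12 := by
  by_cases hsmall : ∀ x ∈ b, #(pendants B P x) ≤ 3
  · calc ∑ x ∈ b, #(pendants B P x) ≤ ∑ _x ∈ b, 3 := sum_le_sum hsmall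
      _ = 12 := by rw [sum_const, hB.card_eq (hP.1.1 hb), smul_eq_mul]
  · obtain ⟨x, hx, hx3⟩ : ∃ x ∈ b, 3 < #(pendants B P x) := by simpa using hsmall
    rw [sum_eq_single_of_mem x hx fun y hy hyx => ?_]
    · exact not_lt.1 (hlight x hx)
    · by_contra hne
      have := hP.card_pendants_le_three hB hb hx hy (Ne.symm hyx) (card_pos.1 (by omega))
      omega

theorem IsMaxPPC_s14.exists_light_not_disjoint (hP : IsMaxPPC_s14 B P) {c : Finset (Fin v)} (hc : c ∈ B)
    (hcheavy : ∀ x ∈ c, ¬IsHeavy B P x) :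
    ∃ b ∈ P, (∀ x ∈ b, ¬IsHeavy B P x) ∧ ¬Disjoint c b := by
  -- Otherwise `c` and disjoint pendants at the heavy points of the blocks it meets replace them.
  by_contra! hall
  set S := coveredPoints P
  set T := {b ∈ P | ¬Disjoint c b}
  have hTP : T ⊆ P := filter_subset _ _
  have hTheavy : ∀ b ∈ T, ∃ x ∈ b, IsHeavy B P x := fun b hb => by
    by_contra! h
    exact (mem_filter.1 hb).2 (hall b (hTP hb) h)
  obtain ⟨p, hp⟩ := hP.inter_coveredPoints_nonempty hB hc
  have : Nonempty (Fin v) := ⟨p⟩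
  choose! x hxb hxheavy using hTheavy
  have hTcard : #T ≤ #(c ∩ S) := by
    refine card_le_card_of_forall_not_disjoint id ((isPPC_iff.1 hP.1).2.subset hTP) fun b hb => ?_
    obtain ⟨q, hqc, hqb⟩ := not_disjoint_iff.1 (mem_filter.1 hb).2
    exact not_disjoint_iff.2 ⟨q, hqb, mem_inter.2 ⟨hqc, subset_coveredPoints (hTP hb) hqb⟩⟩
  have hcsplit := card_inter_add_card_sdiff c S
  rw [hB.card_eq hc] at hcsplit
  obtain ⟨f, hf, hfT⟩ := exists_pairwiseDisjoint_choice (· \ S) 3 (c \ S)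
    (fun b => pendants B P (x b)) T
    (fun _ _ _ hq => (card_sdiff_coveredPoints_of_mem_pendants hB hq).le)
    (fun b _ => pairwiseDisjoint_sdiff_coveredPoints_pendants hB (x b))
    (fun b hb => by have := hxheavy b hb; unfold IsHeavy at this; omega)
  obtain ⟨e, he, hce⟩ := hP.exists_not_disjoint_sdiff_of_pendants hTP hxb
    (fun b hb => (hf b hb).1) hfT hc ⟨p, (mem_inter.1 hp).1⟩
    (fun b hb hxc => hcheavy _ hxc (hxheavy b hb))
    (fun b hb => (hf b hb).2.symm)
  exact (mem_sdiff.1 he).2 (mem_filter.2 ⟨(mem_sdiff.1 he).1, hce⟩)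

end MaximumPPC

section Counting

variable {v : ℕ} {B P : Finset (Finset (Fin v))}

def heavyPoints (B P : Finset (Finset (Fin v))) : Finset (Fin v) :=
  {x ∈ coveredPoints P | IsHeavy B P x}

def lightBlocks (B P : Finset (Finset (Fin v))) : Finset (Finset (Fin v)) :=
  {b ∈ P | ∀ x ∈ b, ¬IsHeavy B P x}

theorem not_isHeavy_of_disjoint_heavyPoints {c : Finset (Fin v)} (hc : Disjoint c (heavyPoints B P))
    {x : Fin v} (hx : x ∈ c) : ¬IsHeavy B P x := fun hheavy => by
  obtain ⟨d, hd⟩ := card_pos.1 (Nat.zero_lt_of_lt hheavy)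
  exact disjoint_left.1 hc hx
    (mem_filter.2 ⟨(mem_inter.1 (mem_inter_coveredPoints_of_mem_pendants hd)).2, hheavy⟩)

theorem IsPPC.lightBlocks (hP : IsPPC B P) : IsPPC B (lightBlocks B P) :=
  ⟨(filter_subset _ _).trans hP.1, fun b₁ h₁ b₂ h₂ =>
    hP.2 b₁ (mem_filter.1 h₁).1 b₂ (mem_filter.1 h₂).1⟩

theorem disjoint_heavyPoints_coveredPoints_lightBlocks :
    Disjoint (heavyPoints B P) (coveredPoints (lightBlocks B P)) := by
  refine disjoint_left.2 fun x hxR hxL => ?_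
  obtain ⟨b, hb, hxb⟩ := mem_coveredPoints.1 hxL
  exact (mem_filter.1 hb).2 x hxb (mem_filter.1 hxR).2

variable (hB : IsPacking v 4 B) (hP : IsMaxPPC_s14 B P)
include hB hP

theorem card_heavyPoints_add_card_lightBlocks :
    #(heavyPoints B P) + #(lightBlocks B P) = #P := by
  have hR : heavyPoints B P = P.biUnion fun b => {x ∈ b | IsHeavy B P x} := by
    rw [heavyPoints, coveredPoints, filter_biUnion]
    rfl
  have hdisj : (P : Set (Finset (Fin v))).PairwiseDisjoint fun b => {x ∈ b | IsHeavy B P x} :=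
    (isPPC_iff.1 hP.1).2.mono fun _ => filter_subset _ _
  rw [hR, card_biUnion hdisj, lightBlocks, card_filter, ← sum_add_distrib, card_eq_sum_ones P]
  refine sum_congr rfl fun b hb => ?_
  by_cases hlight : ∀ x ∈ b, ¬IsHeavy B P x
  · rw [if_pos hlight, filter_false_of_mem hlight, card_empty]
  · obtain ⟨x, hx, hxh⟩ : ∃ x ∈ b, IsHeavy B P x := by simpa using hlight
    rw [if_neg hlight, add_zero]
    exact le_antisymm (hP.card_filter_isHeavy_le_one hB hb)
      (card_pos.2 ⟨x, mem_filter.2 ⟨hx, hxh⟩⟩)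

theorem card_filter_disjoint_heavyPoints_le :
    #{c ∈ B | Disjoint c (heavyPoints B P)} ≤ 13 * #(lightBlocks B P) +
      #{c ∈ B | Disjoint c (heavyPoints B P) ∧ c ∉ P ∧ 1 < #(c ∩ coveredPoints P)} := by
  set L := lightBlocks B P
  have hsub : {c ∈ B | Disjoint c (heavyPoints B P)} ⊆
      L ∪ L.biUnion (·.biUnion (pendants B P)) ∪
      {c ∈ B | Disjoint c (heavyPoints B P) ∧ c ∉ P ∧ 1 < #(c ∩ coveredPoints P)} := by
    intro c hc
    obtain ⟨hcB, hcR⟩ := mem_filter.1 hc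
    by_cases hcP : c ∈ P
    · exact mem_union_left _ (mem_union_left _
        (mem_filter.2 ⟨hcP, fun _ => not_isHeavy_of_disjoint_heavyPoints hcR⟩))
    by_cases h1 : 1 < #(c ∩ coveredPoints P)
    · exact mem_union_right _ (mem_filter.2 ⟨hcB, hcR, hcP, h1⟩)
    obtain ⟨y, hy⟩ := card_eq_one.1
      (le_antisymm (not_lt.1 h1) (hP.inter_coveredPoints_nonempty hB hcB).card_pos)
    have hcy : c ∈ pendants B P y := mem_pendants.2 ⟨hcB, hy⟩
    have hyc := mem_inter.1 (mem_inter_coveredPoints_of_mem_pendants hcy)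
    obtain ⟨b, hb, hyb⟩ := mem_coveredPoints.1 hyc.2
    have hbL : b ∈ L := mem_filter.2 ⟨hb, fun x hx => hP.not_isHeavy_of_mem_pendants hB hb hx
      hyb hcy (not_isHeavy_of_disjoint_heavyPoints hcR hyc.1)⟩
    exact mem_union_left _ (mem_union_right _
      (mem_biUnion.2 ⟨b, hbL, mem_biUnion.2 ⟨y, hyb, hcy⟩⟩))
  have hpend : #(L.biUnion (·.biUnion (pendants B P))) ≤ 12 * #L :=
    calc _ ≤ ∑ b ∈ L, #(b.biUnion (pendants B P)) := card_biUnion_le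
      _ ≤ ∑ _b ∈ L, 12 := sum_le_sum fun b hb => card_biUnion_le.trans
          (hP.sum_card_pendants_le hB (mem_filter.1 hb).1 (mem_filter.1 hb).2)
      _ = 12 * #L := by rw [sum_const, smul_eq_mul, mul_comm]
  grw [card_le_card hsub, card_union_le, card_union_le, hpend]
  omega

theorem card_filter_one_lt_card_inter_le :
    #{c ∈ B | Disjoint c (heavyPoints B P) ∧ c ∉ P ∧ 1 < #(c ∩ coveredPoints P)} ≤
      #(coveredPoints (lightBlocks B P)) *
        #((coveredPoints P \ coveredPoints (lightBlocks B P)) \ heavyPoints B P) +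
      #(crossingPairs (lightBlocks B P)) := by
  set L := lightBlocks B P
  -- pairs joining a point of a light block to a light point of a heavy block, or of another
  -- light block
  set 𝒯₁ := (coveredPoints L ×ˢ
    ((coveredPoints P \ coveredPoints L) \ heavyPoints B P)).image
      fun p => ({p.1, p.2} : Finset (Fin v))
  set 𝒯₂ := crossingPairs L
  have h𝒯 : ∀ e ∈ 𝒯₁ ∪ 𝒯₂, 1 < #e := by
    intro e he
    rcases mem_union.1 he with he | he
    · obtain ⟨⟨y, z⟩, hyz, rfl⟩ := mem_image.1 he
      obtain ⟨hy, hz⟩ := mem_product.1 hyz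
      have hyz : y ≠ z := fun h => (mem_sdiff.1 (mem_sdiff.1 hz).1).2 (h ▸ hy)
      rw [card_pair hyz]
      exact one_lt_two
    · rw [(mem_crossingPairs.1 he).1.2]
      exact one_lt_two
  refine (hB.card_le_card_of_forall_exists_subset (filter_subset _ _) h𝒯 fun c hc => ?_).trans
    ((card_union_le _ _).trans (by grw [card_image_le, card_product]))
  obtain ⟨hcB, hcR, hcP, h1⟩ := mem_filter.1 hc
  obtain ⟨b, hb, hblight, hcb⟩ :=
    hP.exists_light_not_disjoint hB hcB fun _ => not_isHeavy_of_disjoint_heavyPoints hcR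
  obtain ⟨y, hyc, hyb⟩ := not_disjoint_iff.1 hcb
  have hyL : y ∈ coveredPoints L :=
    mem_coveredPoints.2 ⟨b, mem_filter.2 ⟨hb, hblight⟩, hyb⟩
  obtain ⟨z, hz, hzy⟩ := exists_mem_ne h1 y
  obtain ⟨hzc, hzS⟩ := mem_inter.1 hz
  have hyzc : {y, z} ⊆ c := insert_subset hyc (singleton_subset_iff.2 hzc)
  refine ⟨{y, z}, ?_, hyzc⟩
  by_cases hzL : z ∈ coveredPoints L
  · refine mem_union_right _ (mem_crossingPairs.2 ⟨⟨insert_subset hyL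
      (singleton_subset_iff.2 hzL), card_pair hzy.symm⟩, fun b' hb' hyzb' => hcP ?_⟩)
    obtain ⟨hb'P, -⟩ := mem_filter.1 hb'
    rwa [hB.eq_of_mem_of_mem hcB (hP.1.1 hb'P) hzy.symm hyc hzc (hyzb' (mem_insert_self y {z}))
      (hyzb' (mem_insert_of_mem (mem_singleton_self z)))]
  · exact mem_union_left _ (mem_image.2 ⟨(y, z), mem_product.2 ⟨hyL, mem_sdiff.2
      ⟨mem_sdiff.2 ⟨hzS, hzL⟩, fun hzR => disjoint_left.1 hcR hzc hzR⟩⟩, rfl⟩)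

theorem card_sdiff_coveredPoints_lightBlocks_sdiff_heavyPoints :
    #((coveredPoints P \ coveredPoints (lightBlocks B P)) \ heavyPoints B P) =
      3 * #(heavyPoints B P) := by
  have hLP : coveredPoints (lightBlocks B P) ⊆ coveredPoints P :=
    biUnion_subset_biUnion_of_subset_left id (filter_subset _ _)
  have hRL : heavyPoints B P ⊆ coveredPoints P \ coveredPoints (lightBlocks B P) := fun x hx =>
    mem_sdiff.2 ⟨(mem_filter.1 hx).1,
      disjoint_left.1 disjoint_heavyPoints_coveredPoints_lightBlocks hx⟩
  have := card_heavyPoints_add_card_lightBlocks hB hP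
  rw [card_sdiff_of_subset hRL, card_sdiff_of_subset hLP, hP.1.card_coveredPoints hB,
    hP.1.lightBlocks.card_coveredPoints hB]
  omega

theorem card_crossingPairs_lightBlocks :
    #(crossingPairs (lightBlocks B P)) + 8 * #(lightBlocks B P) =
      8 * #(lightBlocks B P) * #(lightBlocks B P) := by
  have hpairs := card_crossingPairs_add_sum_choose (isPPC_iff.1 hP.1.lightBlocks).2
  rw [sum_congr rfl fun b hb => by rw [hB.card_eq (hP.1.lightBlocks.1 hb)], sum_const,
    smul_eq_mul, ← coveredPoints, hP.1.lightBlocks.card_coveredPoints hB] at hpairs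
  generalize #(lightBlocks B P) = m at hpairs ⊢
  have hchoose : (4 * m).choose 2 + 2 * m = 8 * m * m := by
    rcases m with _ | m
    · rfl
    rw [Nat.choose_two_right, show 4 * (m + 1) * (4 * (m + 1) - 1) = 2 * ((m + 1) * (8 * m + 6))
      by rw [show 4 * (m + 1) - 1 = 4 * m + 3 by omega]; ring, Nat.mul_div_cancel_left _ two_pos]
    ring
  have h42 : Nat.choose 4 2 = 6 := rfl
  rw [h42] at hpairs
  linarith

theorem IsMaxPPC_s14.card_le :
    6 * #B + #(heavyPoints B P) * (#(heavyPoints B P) + 1) ≤ 2 * #(heavyPoints B P) * v +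
      6 * #(lightBlocks B P) * (12 * #(heavyPoints B P) + 8 * #(lightBlocks B P) + 5) := by
  have hthrough := hB.card_filter_not_disjoint_le (heavyPoints B P)
  have hsplit := card_filter_add_card_filter_not (s := B) (Disjoint · (heavyPoints B P))
  have hlight := card_filter_disjoint_heavyPoints_le hB hP
  have hmulti := card_filter_one_lt_card_inter_le hB hP
  rw [hP.1.lightBlocks.card_coveredPoints hB,
    card_sdiff_coveredPoints_lightBlocks_sdiff_heavyPoints hB hP] at hmulti
  have hpairs := card_crossingPairs_lightBlocks hB hP
  norm_num at hthrough
  nlinarith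

end Counting

theorem stmt14_general (ρ v : ℕ)
    (hv : (27 * (ρ : ℚ) ^ 2 - 3 * ρ + 60) / 2 ≤ (v : ℚ)) :
    ∀ B : Finset (Finset (Fin v)), IsPacking v 4 B → MaxPPCSize B ρ →
      (B.card : ℚ) ≤ (ρ : ℚ) * v / 3 - (ρ : ℚ) * (ρ + 1) / 6 := by
  intro B hB hsize
  obtain ⟨P, hP, rfl⟩ := hsize.exists_isMaxPPC
  have hcard := hP.card_le hB
  rw [← card_heavyPoints_add_card_lightBlocks hB hP] at hv ⊢
  generalize #(heavyPoints B P) = h, #(lightBlocks B P) = m at *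
  have hcardQ : (6 * #B + h * (h + 1) : ℚ) ≤ 2 * h * v + 6 * m * (12 * h + 8 * m + 5) := by
    exact_mod_cast hcard
  have hρ : 0 ≤ ((h + m : ℕ) - 1 : ℚ) * ((h + m : ℕ) - 2) := by
    rcases h + m with _ | _ | n <;> push_cast <;> nlinarith
  push_cast at hv hρ ⊢
  rcases Nat.eq_zero_or_pos m with rfl | hm
  · simp only [CharP.cast_eq_zero, add_zero, mul_zero, zero_mul] at hcardQ ⊢
    linarith
  · have hv' : 74 * (h : ℚ) + 49 * m + 31 ≤ 2 * v := by
      have : (1 : ℚ) ≤ m := by exact_mod_cast hm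
      nlinarith
    nlinarith [mul_le_mul_of_nonneg_left hv' (Nat.cast_nonneg (α := ℚ) m)]

theorem stmt14 (ρ v : ℕ) (hρ : 1 ≤ ρ)
    (hv : (27 * (ρ : ℚ) ^ 2 - 3 * ρ + 60) / 2 ≤ (v : ℚ)) :
    ∀ B : Finset (Finset (Fin v)), IsPacking v 4 B → MaxPPCSize B ρ →
      (B.card : ℚ) ≤ (ρ : ℚ) * v / 3 - (ρ : ℚ) * (ρ + 1) / 6 :=
  stmt14_general ρ v hv
end
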